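/- The zero set of the entire function φ(z) = exp(z) + exp(ω^{p−1} z) is exactly the set {r·exp(iπ/p) : r ∈ ℝ and r·sin(π/p) ∈ π/2 + πℤ}. -/
import Mathlib


open Complex Filter Set

theorem key_exp_identity (t : ℂ) :
    (1 : ℂ) - exp (-(2*t*I)) = 2 * Complex.sin t * I * exp (-(t*I)) := by
  have h1 : exp (t*I) * exp (-(t*I)) = 1 := by rw [← Complex.exp_add]; simp
  rw [Complex.sin, show (-(2*t*I)) = (-(t*I)) + (-(t*I)) by ring, Complex.exp_add]
  simp only [neg_mul]
  linear_combination (-1 : ℂ)*h1 + (exp (t*I)*exp (-(t*I)) - exp (-(t*I))*exp (-(t*I))) * Complex.I_mul_I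

/-- The function `φ(z) = exp(z) + exp(ω^{p-1} z)` with `ω = exp(2πi/p)`. -/
noncomputable def phi (p : ℕ) (z : ℂ) : ℂ :=
  Complex.exp z + Complex.exp (Complex.exp (2 * Real.pi * Complex.I / p) ^ (p - 1) * z)

theorem zero_set_of_phi (p : ℕ) (hp : 3 ≤ p) :
    {z : ℂ | phi p z = 0} =
      {z : ℂ | ∃ r : ℝ, (∃ n : ℤ, r * Real.sin (Real.pi / p) = Real.pi / 2 + n * Real.pi) ∧
        z = (r : ℂ) * Complex.exp (Complex.I * (Real.pi / p))} := by
  have hp0 : (p : ℝ) ≠ 0 := by positivity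
  have hpc : (p : ℂ) ≠ 0 := by exact_mod_cast Nat.cast_ne_zero.mpr (by omega)
  have hsin : Real.sin (Real.pi / p) ≠ 0 := by
    refine ne_of_gt (Real.sin_pos_of_pos_of_lt_pi (by positivity) ?_)
    rw [div_lt_iff₀ (by positivity)]
    nlinarith [Real.pi_pos, (by exact_mod_cast (by omega : 1 < p) : (1:ℝ) < (p:ℝ))]
  set t : ℂ := (Real.pi : ℂ) / p with ht
  set s : ℝ := Real.sin (Real.pi / p) with hs
  have hc : Complex.exp (2 * Real.pi * Complex.I / p) ^ (p - 1) = Complex.exp (-(2*t*I)) := by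
    rw [← Complex.exp_nat_mul, Complex.exp_eq_exp_iff_exists_int]
    use 1
    have hcast : ((p - 1 : ℕ) : ℂ) = (p : ℂ) - 1 := by
      push_cast [Nat.cast_sub (by omega : 1 ≤ p)]; ring
    rw [hcast, ht]
    field_simp
    ring
  have hkey : (1 : ℂ) - exp (-(2*t*I)) = 2 * (s : ℂ) * I * exp (-(t*I)) := by
    rw [key_exp_identity t]
    congr 2
    rw [hs, ht]
    rw [show (Real.pi : ℂ)/p = ((Real.pi / p : ℝ) : ℂ) by push_cast; ring, ← Complex.ofReal_sin]
  have hmul : exp (-(t*I)) * exp (I * ((Real.pi : ℂ) / p)) = 1 := by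
    rw [← Complex.exp_add, show -(t*I) + I * ((Real.pi : ℂ)/p) = 0 by rw [ht]; ring,
      Complex.exp_zero]
  ext z
  simp only [Set.mem_setOf_eq, phi, hc]
  constructor
  · intro h
    have h2 : Complex.exp (z - Complex.exp (-(2*t*I)) * z) = -1 := by
      rw [Complex.exp_sub, div_eq_iff (Complex.exp_ne_zero _)]
      linear_combination h
    rw [show (-1 : ℂ) = Complex.exp (Real.pi * I) from (Complex.exp_pi_mul_I).symm,
      Complex.exp_eq_exp_iff_exists_int] at h2
    obtain ⟨n, hn⟩ := h2
    refine ⟨(Real.pi/2 + n*Real.pi)/s, ⟨n, by field_simp⟩, ?_⟩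
    have hrc : (((Real.pi/2 + n*Real.pi)/s : ℝ) : ℂ) * (s : ℂ) = (Real.pi : ℂ)/2 + n * Real.pi := by
      have hsc : (s:ℂ) ≠ 0 := by exact_mod_cast hsin
      push_cast
      field_simp
    have hne : (1:ℂ) - exp (-(2*t*I)) ≠ 0 := by
      rw [hkey]
      exact mul_ne_zero (mul_ne_zero (mul_ne_zero two_ne_zero (by exact_mod_cast hsin)) I_ne_zero)
        (Complex.exp_ne_zero _)
    apply mul_left_cancel₀ hne
    rw [hkey]
    linear_combination hn - z*hkey - 2*I*hrc - 2*(s:ℂ)*(((Real.pi/2 + n*Real.pi)/s : ℝ):ℂ)*I*hmul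
  · rintro ⟨r, ⟨n, hrn⟩, hz⟩
    have hrc : (r : ℂ) * (s : ℂ) = (Real.pi : ℂ)/2 + n * Real.pi := by
      exact_mod_cast congrArg (fun x : ℝ => (x : ℂ)) hrn
    have h2 : z - Complex.exp (-(2*t*I)) * z = Real.pi * I + n * (2 * Real.pi * I) := by
      rw [hz]
      linear_combination ((r:ℂ)*exp (I*((Real.pi:ℂ)/p)))*hkey + 2*(s:ℂ)*(r:ℂ)*I*hmul + 2*I*hrc
    have h3 : Complex.exp (z - Complex.exp (-(2*t*I)) * z) = -1 := by
      rw [h2, Complex.exp_add, Complex.exp_int_mul_two_pi_mul_I, Complex.exp_pi_mul_I]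
      ring
    rw [Complex.exp_sub, div_eq_iff (Complex.exp_ne_zero _)] at h3
    linear_combination h3
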